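/- arXiv:0907.1715 — 6 statements merged into one kernel-verified Lean document; each statement's English description precedes it below -/
import Mathlib

section
/- Let Q ∈ ℂ[x,y,z] be weighted-homogeneous of degree d with respect to the weights a ≤ b ≤ c, and assume d > b + c. Then the linear span of x and y meets the space of Poisson brackets trivially modulo Q: if λ, μ ∈ ℂ and λ·x + μ·y lies in the sum of the ℂ-linear span of { {f,g} : f, g ∈ ℂ[x,y,z] } and the ideal (Q), then λ = μ = 0. -/
/-!
Give `x, y, z` the weights `a ≤ b ≤ c`. Every bracket `{f,g}` is a combination of the partials
`Q_x, Q_y, Q_z`, whose monomials have weight at least `d - c > b`, and the multiples of `Q` have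
weight at least `d > b`. So the whole space of brackets plus `(Q)` lies in the monomial ideal
spanned by the monomials of weight `> b`, while `x` and `y` have weight `≤ b`.
-/

open MvPolynomial

/-- The Jacobian Poisson bracket on `ℂ[x,y,z]` associated to `Q`:
`{f,g} = Q_x (f_y g_z − f_z g_y) + Q_y (f_z g_x − f_x g_z) + Q_z (f_x g_y − f_y g_x)`. -/
noncomputable def jacBracket (Q f g : MvPolynomial (Fin 3) ℂ) : MvPolynomial (Fin 3) ℂ :=
  pderiv 0 Q * (pderiv 1 f * pderiv 2 g - pderiv 2 f * pderiv 1 g) +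
  pderiv 1 Q * (pderiv 2 f * pderiv 0 g - pderiv 0 f * pderiv 2 g) +
  pderiv 2 Q * (pderiv 0 f * pderiv 1 g - pderiv 1 f * pderiv 0 g)

namespace MvPolynomial

variable {σ R : Type*} [CommSemiring R]

variable (R) in
noncomputable def weightGtIdeal (w : σ → ℕ) (n : ℕ) : Ideal (MvPolynomial σ R) :=
  Ideal.span ((fun s => monomial s (1 : R)) '' {s | n < s.weight w})

theorem mem_weightGtIdeal_iff {w : σ → ℕ} {n : ℕ} {p : MvPolynomial σ R} :
    p ∈ weightGtIdeal R w n ↔ ∀ s ∈ p.support, n < s.weight w := by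
  rw [weightGtIdeal, mem_ideal_span_monomial_image]
  refine ⟨fun h s hs => ?_, fun h s hs => ⟨s, h s hs, le_rfl⟩⟩
  obtain ⟨t, ht, hts⟩ := h s hs
  obtain ⟨u, rfl⟩ := exists_add_of_le hts
  rw [map_add]
  exact ht.trans_le (Nat.le_add_right _ _)

theorem coeff_eq_zero_of_mem_weightGtIdeal {w : σ → ℕ} {n : ℕ} {p : MvPolynomial σ R}
    (hp : p ∈ weightGtIdeal R w n) {s : σ →₀ ℕ} (hs : s.weight w ≤ n) : p.coeff s = 0 :=
  notMem_support_iff.mp fun h => (hs.trans_lt (mem_weightGtIdeal_iff.mp hp s h)).false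

theorem IsWeightedHomogeneous.weight_add_of_coeff_pderiv_ne_zero {M : Type*} [AddCommMonoid M]
    {w : σ → M} {d : M} {Q : MvPolynomial σ R} (hQ : Q.IsWeightedHomogeneous w d) {i : σ}
    {s : σ →₀ ℕ} (hs : (pderiv i Q).coeff s ≠ 0) : s.weight w + w i = d := by
  rw [coeff_pderiv] at hs
  rw [← hQ (left_ne_zero_of_mul hs), map_add, Finsupp.weight_single, one_smul]

theorem IsWeightedHomogeneous.pderiv_mem_weightGtIdeal {w : σ → ℕ} {d n : ℕ}
    {Q : MvPolynomial σ R} (hQ : Q.IsWeightedHomogeneous w d) {i : σ} (hd : n + w i < d) :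
    pderiv i Q ∈ weightGtIdeal R w n := by
  refine mem_weightGtIdeal_iff.mpr fun s hs => ?_
  have := hQ.weight_add_of_coeff_pderiv_ne_zero (mem_support_iff.mp hs)
  omega

theorem IsWeightedHomogeneous.mem_weightGtIdeal {w : σ → ℕ} {d n : ℕ}
    {Q : MvPolynomial σ R} (hQ : Q.IsWeightedHomogeneous w d) (hd : n < d) :
    Q ∈ weightGtIdeal R w n :=
  mem_weightGtIdeal_iff.mpr fun _ hs => hQ (mem_support_iff.mp hs) ▸ hd

end MvPolynomial

theorem jacBracket_mem_of_pderiv_mem {Q : MvPolynomial (Fin 3) ℂ}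
    {I : Ideal (MvPolynomial (Fin 3) ℂ)} (hQ : ∀ i, pderiv i Q ∈ I) (f g : MvPolynomial (Fin 3) ℂ) :
    jacBracket Q f g ∈ I :=
  I.add_mem (I.add_mem (I.mul_mem_right _ (hQ 0)) (I.mul_mem_right _ (hQ 1)))
    (I.mul_mem_right _ (hQ 2))

theorem span_jacBracket_sup_span_le {Q : MvPolynomial (Fin 3) ℂ}
    {I : Ideal (MvPolynomial (Fin 3) ℂ)} (hQ : ∀ i, pderiv i Q ∈ I) (hQI : Q ∈ I) :
    Submodule.span ℂ {p | ∃ f g, jacBracket Q f g = p} ⊔ (Ideal.span {Q}).restrictScalars ℂ ≤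
      I.restrictScalars ℂ := by
  refine sup_le (Submodule.span_le.mpr ?_) ?_
  · rintro _ ⟨f, g, rfl⟩
    exact jacBracket_mem_of_pderiv_mem hQ f g
  · exact Submodule.restrictScalars_mono ℂ ((Ideal.span_singleton_le_iff_mem I).mpr hQI)

theorem stmt0_general (a b c d : ℕ) (hab : a ≤ b) (hbc : b ≤ c) (hd : b + c < d)
    (Q : MvPolynomial (Fin 3) ℂ) (hQ : Q.IsWeightedHomogeneous ![a, b, c] d)
    (l m : ℂ)
    (hmem : (C l * X 0 + C m * X 1 : MvPolynomial (Fin 3) ℂ) ∈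
      Submodule.span ℂ {p : MvPolynomial (Fin 3) ℂ | ∃ f g, jacBracket Q f g = p} ⊔
        (Ideal.span {Q}).restrictScalars ℂ) :
    l = 0 ∧ m = 0 := by
  have hpderiv : ∀ i, pderiv i Q ∈ weightGtIdeal ℂ ![a, b, c] b := fun i =>
    hQ.pderiv_mem_weightGtIdeal (by fin_cases i <;> simp <;> omega)
  have hweight := span_jacBracket_sup_span_le hpderiv (hQ.mem_weightGtIdeal (by omega)) hmem
  have hx := coeff_eq_zero_of_mem_weightGtIdeal hweight (s := Finsupp.single 0 1)
    (by simpa [Finsupp.weight_single] using hab)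
  have hy := coeff_eq_zero_of_mem_weightGtIdeal hweight (s := Finsupp.single 1 1)
    (by simp [Finsupp.weight_single])
  exact ⟨by simpa [coeff_X, Finsupp.single_eq_single_iff] using hx,
    by simpa [coeff_X, Finsupp.single_eq_single_iff] using hy⟩

theorem stmt0 (a b c d : ℕ) (ha : 0 < a) (hab : a ≤ b) (hbc : b ≤ c) (hd : b + c < d)
    (Q : MvPolynomial (Fin 3) ℂ) (hQ : Q.IsWeightedHomogeneous ![a, b, c] d)
    (l m : ℂ)
    (hmem : (C l * X 0 + C m * X 1 : MvPolynomial (Fin 3) ℂ) ∈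
      Submodule.span ℂ {p : MvPolynomial (Fin 3) ℂ | ∃ f g, jacBracket Q f g = p} ⊔
        (Ideal.span {Q}).restrictScalars ℂ) :
    l = 0 ∧ m = 0 :=
  stmt0_general a b c d hab hbc hd Q hQ l m hmem
end

section
/- Let Q ∈ ℂ[x,y,z] be irreducible, with Q_z ∉ (Q), and suppose the only common zero in ℂ³ of Q, Q_x, Q_y, Q_z is the origin (0,0,0). If f ∈ ℂ[x,y,z] satisfies Q_x·f ∈ (Q, Q_z) and Q_y·f ∈ (Q, Q_z), then f ∈ (Q, Q_z). -/
/-!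
Since `Q` is prime and does not divide `Q_z`, every syzygy of `(Q, Q_z)` is a multiple of the
Koszul one; combined with the Koszul exactness of `(x, y, z)` this shows that `x g, y g, z g ∈ I`
forces `g ∈ I` for `I = (Q, Q_z)`, i.e. `I : 𝔪 = I` for the maximal ideal `𝔪` of the origin, and
hence `I : 𝔪ⁿ = I` for all `n`. The ideal `I : f` contains `(Q, Q_x, Q_y, Q_z)`, whose only zero
is the origin, so by the Nullstellensatz it contains some `𝔪ⁿ`, and `f ∈ I : 𝔪ⁿ = I`.
-/

open MvPolynomial

theorem Prime.exists_eq_mul_of_mul_eq_mul {R : Type*} [CommRing R] [IsDomain R] {q p a b : R}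
    (hq : Prime q) (hp : ¬ q ∣ p) (h : a * q = b * p) : ∃ c, a = c * p ∧ b = c * q := by
  obtain ⟨c, rfl⟩ := (hq.dvd_mul.mp (Dvd.intro_left a h)).resolve_right hp
  refine ⟨c, mul_right_cancel₀ hq.ne_zero ?_, mul_comm _ _⟩
  linear_combination h

namespace MvPolynomial

variable {σ R : Type*} [CommRing R]

theorem X_dvd_sub_aeval_update_zero [DecidableEq σ] (k : σ) (p : MvPolynomial σ R) :
    X k ∣ p - aeval (Function.update X k 0) p := by
  induction p using MvPolynomial.induction_on with
  | C a => simp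
  | add p q hp hq => simpa [sub_add_sub_comm] using dvd_add hp hq
  | mul_X p i hp =>
    rcases eq_or_ne i k with rfl | hik
    · simp
    · simpa [hik, ← sub_mul] using hp.mul_right (X i)

variable [IsDomain R]

theorem exists_koszul_of_X_syzygy {i j k : σ} (hij : i ≠ j) (hik : i ≠ k) (hjk : j ≠ k)
    {c₁ c₂ c₃ : MvPolynomial σ R} (h : X i * c₁ - X j * c₂ + X k * c₃ = 0) :
    ∃ u v w, c₁ = X j * u + X k * v ∧ c₂ = X i * u + X k * w ∧ c₃ = X j * w - X i * v := by
  classical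
  set s := aeval (R := R) (Function.update (X : σ → MvPolynomial σ R) k 0)
  have hs : s c₁ * X i = s c₂ * X j := by
    have := congrArg s h
    simp only [s, map_add, map_sub, map_mul, aeval_X, Function.update_self,
      Function.update_of_ne hik, Function.update_of_ne hjk, zero_mul, add_zero, map_zero] at this
    linear_combination this
  obtain ⟨u, hu₁, hu₂⟩ := X_prime.exists_eq_mul_of_mul_eq_mul (X_dvd_X.not.mpr hij) hs
  obtain ⟨v, hv⟩ := X_dvd_sub_aeval_update_zero k c₁
  obtain ⟨w, hw⟩ := X_dvd_sub_aeval_update_zero k c₂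
  refine ⟨u, v, w, by linear_combination hv + hu₁, by linear_combination hw + hu₂, ?_⟩
  refine mul_left_cancel₀ (X_prime (i := k)).ne_zero ?_
  linear_combination h - X i * (hv + hu₁) + X j * (hw + hu₂)

theorem mem_span_pair_of_X_mul_mem {i j k : σ} (hij : i ≠ j) (hik : i ≠ k) (hjk : j ≠ k)
    {Q P g : MvPolynomial σ R} (hQ : Prime Q) (hP : ¬ Q ∣ P)
    (hi : X i * g ∈ Ideal.span {Q, P}) (hj : X j * g ∈ Ideal.span {Q, P})
    (hk : X k * g ∈ Ideal.span {Q, P}) : g ∈ Ideal.span {Q, P} := by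
  obtain ⟨aᵢ, bᵢ, hgᵢ⟩ := Ideal.mem_span_pair.mp hi
  obtain ⟨aⱼ, bⱼ, hgⱼ⟩ := Ideal.mem_span_pair.mp hj
  obtain ⟨aₖ, bₖ, hgₖ⟩ := Ideal.mem_span_pair.mp hk
  obtain ⟨c₁, ha₁, -⟩ := hQ.exists_eq_mul_of_mul_eq_mul hP
    (a := X k * aⱼ - X j * aₖ) (b := X j * bₖ - X k * bⱼ)
    (by linear_combination X k * hgⱼ - X j * hgₖ)
  obtain ⟨c₂, ha₂, -⟩ := hQ.exists_eq_mul_of_mul_eq_mul hP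
    (a := X k * aᵢ - X i * aₖ) (b := X i * bₖ - X k * bᵢ)
    (by linear_combination X k * hgᵢ - X i * hgₖ)
  obtain ⟨c₃, ha₃, hb₃⟩ := hQ.exists_eq_mul_of_mul_eq_mul hP
    (a := X j * aᵢ - X i * aⱼ) (b := X i * bⱼ - X j * bᵢ)
    (by linear_combination X j * hgᵢ - X i * hgⱼ)
  have hsyz : X i * c₁ - X j * c₂ + X k * c₃ = 0 := by
    refine mul_right_cancel₀ (fun h : P = 0 ↦ hP (h ▸ dvd_zero Q)) ?_
    linear_combination X j * ha₂ - X i * ha₁ - X k * ha₃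
  obtain ⟨-, v, w, -, -, hc₃⟩ := exists_koszul_of_X_syzygy hij hik hjk hsyz
  have hXij : ¬ X i ∣ (X j : MvPolynomial σ R) := X_dvd_X.not.mpr hij
  obtain ⟨a, -, ha⟩ := X_prime.exists_eq_mul_of_mul_eq_mul hXij
    (a := aⱼ - v * P) (b := aᵢ - w * P) (by linear_combination -ha₃ - P * hc₃)
  obtain ⟨b, -, hb⟩ := X_prime.exists_eq_mul_of_mul_eq_mul hXij
    (a := bⱼ + v * Q) (b := bᵢ + w * Q) (by linear_combination hb₃ + Q * hc₃)
  refine Ideal.mem_span_pair.mpr ⟨a, b, mul_left_cancel₀ (X_prime (i := i)).ne_zero ?_⟩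
  linear_combination hgᵢ - Q * ha - P * hb

end MvPolynomial

theorem Ideal.colon_pow_le_of_colon_le {R : Type*} [CommRing R] {I m : Ideal R}
    (h : I.colon (m : Set R) ≤ I) (n : ℕ) : I.colon ((m ^ n : Ideal R) : Set R) ≤ I := by
  induction n with
  | zero => simp
  | succ n ih =>
    refine fun r hr ↦ ih (Submodule.mem_colon.mpr fun a ha ↦ h (Submodule.mem_colon.mpr ?_))
    intro b hb
    simpa [mul_assoc, pow_succ] using Submodule.mem_colon.mp hr _ (Ideal.mul_mem_mul ha hb)

theorem stmt3 (Q : MvPolynomial (Fin 3) ℂ) (hirr : Irreducible Q)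
    (hQz : pderiv 2 Q ∉ Ideal.span {Q})
    (hiso : ∀ p : Fin 3 → ℂ, eval p Q = 0 → eval p (pderiv 0 Q) = 0 →
      eval p (pderiv 1 Q) = 0 → eval p (pderiv 2 Q) = 0 → p = 0)
    (f : MvPolynomial (Fin 3) ℂ)
    (hx : pderiv 0 Q * f ∈ Ideal.span {Q, pderiv 2 Q})
    (hy : pderiv 1 Q * f ∈ Ideal.span {Q, pderiv 2 Q}) :
    f ∈ Ideal.span {Q, pderiv 2 Q} := by
  set I := Ideal.span {Q, pderiv 2 Q}
  set 𝔪 : Ideal (MvPolynomial (Fin 3) ℂ) := vanishingIdeal ℂ {(0 : Fin 3 → ℂ)}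
  have h𝔪 : I.colon (𝔪 : Set _) ≤ I := by
    intro g hg
    have hX (i : Fin 3) : X i * g ∈ I := by
      rw [mul_comm]
      exact Submodule.mem_colon.mp hg _ (by simp [𝔪])
    exact mem_span_pair_of_X_mul_mem (i := 0) (j := 1) (k := 2) (by decide) (by decide)
      (by decide) hirr.prime (mt Ideal.mem_span_singleton.mpr hQz) (hX 0) (hX 1) (hX 2)
  have hJac : Ideal.span {Q, pderiv 0 Q, pderiv 1 Q, pderiv 2 Q} ≤ I.colon {f} := by
    simp only [Ideal.span_le, Set.insert_subset_iff, Set.singleton_subset_iff, SetLike.mem_coe,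
      Submodule.mem_colon_singleton, smul_eq_mul]
    exact ⟨I.mul_mem_right f (Ideal.subset_span (by simp)), hx, hy,
      I.mul_mem_right f (Ideal.subset_span (by simp))⟩
  have hzero : zeroLocus ℂ (Ideal.span {Q, pderiv 0 Q, pderiv 1 Q, pderiv 2 Q}) ⊆ {0} := by
    intro p hp
    simp only [zeroLocus_span, Set.mem_ofPred_eq, Set.forall_mem_insert,
      Set.mem_singleton_iff, forall_eq] at hp
    exact hiso p hp.1 hp.2.1 hp.2.2.1 hp.2.2.2
  have hrad : 𝔪 ≤ (I.colon {f}).radical := by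
    rw [← vanishingIdeal_zeroLocus_eq_radical (K := ℂ)]
    exact vanishingIdeal_anti_mono ((zeroLocus_anti_mono hJac).trans hzero)
  obtain ⟨n, hn⟩ := Ideal.exists_pow_le_of_le_radical_of_fg hrad (IsNoetherian.noetherian 𝔪)
  refine Ideal.colon_pow_le_of_colon_le h𝔪 n (Submodule.mem_colon.mpr fun a ha ↦ ?_)
  simpa [mul_comm] using Submodule.mem_colon_singleton.mp (hn ha)
end

section
/- Let Q ∈ ℂ[x,y,z] be irreducible with Q_z ∉ (Q), and let j ≥ 0 be an integer. Then { ∂g/∂z : g ∈ (Q) } ∩ (Q^j) = { ∂h/∂z : h ∈ (Q^{j+1}) }; that is, the z-derivative of an element of the ideal (Q) lies in the ideal (Q^j) if and only if it is the z-derivative of an element of the ideal (Q^{j+1}). -/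
/-!
For `h = a * Q ^ (n + 1)` the Leibniz rule gives `D h = Q ^ n * (Q * D a + (n + 1) * a * D Q)`.
Hence if `Q ^ (n + 1)` divides `D h`, then the prime `Q` divides `(n + 1) * a * D Q`; as `n + 1` is
a unit and `Q ∤ D Q`, it divides `a`, i.e. `h ∈ (Q ^ (n + 2))`. Induction on `n` lifts any `g ∈ (Q)`
with `D g ∈ (Q ^ n)` to an `h ∈ (Q ^ (n + 1))` with the same derivative; the converse inclusion
is the Leibniz rule again.
-/

open MvPolynomial

namespace Derivation

variable {A R : Type*} [CommRing A] [CommRing R] [Algebra A R] (D : Derivation A R R)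

theorem leibniz_mul_pow_succ (a Q : R) (n : ℕ) :
    D (a * Q ^ (n + 1)) = Q ^ n * (Q * D a + (n + 1) * a * D Q) := by
  rw [leibniz, leibniz_pow, smul_eq_mul, nsmul_eq_mul, smul_eq_mul, Nat.add_sub_cancel]
  push_cast; ring

theorem pow_dvd_of_pow_succ_dvd {Q h : R} {n : ℕ} (hh : Q ^ (n + 1) ∣ h) : Q ^ n ∣ D h := by
  obtain ⟨a, rfl⟩ := hh
  rw [mul_comm, D.leibniz_mul_pow_succ]
  exact dvd_mul_right _ _

variable [IsDomain R] [Algebra ℚ R] {Q : R}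

theorem dvd_of_pow_succ_dvd_apply_mul_pow_succ (hQ : Prime Q) (hDQ : ¬Q ∣ D Q) {a : R} {n : ℕ}
    (ha : Q ^ (n + 1) ∣ D (a * Q ^ (n + 1))) : Q ∣ a := by
  have hunit : IsUnit ((n + 1 : ℕ) : R) := by
    rw [← _root_.map_natCast (algebraMap ℚ R)]
    exact (isUnit_iff_ne_zero.2 (by positivity)).map _
  rw [D.leibniz_mul_pow_succ, pow_succ, mul_dvd_mul_iff_left (pow_ne_zero n hQ.ne_zero),
    dvd_add_right (dvd_mul_right Q _)] at ha
  push_cast at hunit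
  rcases hQ.dvd_mul.1 ha with h | h
  · exact hunit.dvd_mul_left.1 h
  · exact absurd h hDQ

theorem exists_pow_succ_dvd_eq_of_pow_dvd (hQ : Prime Q) (hDQ : ¬Q ∣ D Q) {g : R} (hg : Q ∣ g) :
    ∀ {n : ℕ}, Q ^ n ∣ D g → ∃ h, Q ^ (n + 1) ∣ h ∧ D h = D g
  | 0, _ => ⟨g, by rwa [pow_one], rfl⟩
  | n + 1, hn => by
    obtain ⟨_, ⟨a, rfl⟩, hh⟩ :=
      exists_pow_succ_dvd_eq_of_pow_dvd hQ hDQ hg ((pow_dvd_pow Q n.le_succ).trans hn)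
    rw [mul_comm] at hh
    obtain ⟨b, rfl⟩ := D.dvd_of_pow_succ_dvd_apply_mul_pow_succ hQ hDQ (hh ▸ hn)
    exact ⟨Q ^ (n + 2) * b, dvd_mul_right _ _, by rw [← hh]; ring_nf⟩

theorem image_span_inter_span_pow_eq (hQ : Prime Q) (hDQ : D Q ∉ Ideal.span {Q}) (n : ℕ) :
    {p : R | ∃ g ∈ Ideal.span {Q}, D g = p} ∩ (Ideal.span {Q ^ n} : Ideal R) =
      {p : R | ∃ h ∈ Ideal.span {Q ^ (n + 1)}, D h = p} := by
  rw [Ideal.mem_span_singleton] at hDQ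
  ext p
  simp only [Set.mem_inter_iff, Set.mem_ofPred_eq, SetLike.mem_coe, Ideal.mem_span_singleton]
  constructor
  · rintro ⟨⟨g, hg, rfl⟩, hp⟩
    exact D.exists_pow_succ_dvd_eq_of_pow_dvd hQ hDQ hg hp
  · rintro ⟨h, hh, rfl⟩
    exact ⟨⟨h, (dvd_pow_self Q n.succ_ne_zero).trans hh, rfl⟩, D.pow_dvd_of_pow_succ_dvd hh⟩

end Derivation

theorem stmt5 (Q : MvPolynomial (Fin 3) ℂ) (hirr : Irreducible Q)
    (hQz : pderiv 2 Q ∉ Ideal.span {Q}) (j : ℕ) :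
    {p : MvPolynomial (Fin 3) ℂ | ∃ g ∈ Ideal.span {Q}, pderiv 2 g = p} ∩
        (Ideal.span {Q ^ j} : Ideal (MvPolynomial (Fin 3) ℂ)) =
      {p : MvPolynomial (Fin 3) ℂ | ∃ h ∈ Ideal.span {Q ^ (j + 1)}, pderiv 2 h = p} :=
  (pderiv 2).image_span_inter_span_pow_eq hirr.prime hQz j
end

section
/- Let Q ∈ ℂ[x,y,z] be irreducible and weighted-homogeneous of degree d with respect to the weights a, b, c, with Q_z ∉ (Q). Let f ∈ ℂ[x,y,z] be weighted-homogeneous of degree m ≥ 1 and suppose Q_z·f_x − Q_x·f_z ∈ (Q) and Q_z·f_y − Q_y·f_z ∈ (Q). Then f ∈ (Q). (Equivalently, the joint kernel of the tangential derivations D_x and D_y on homogeneous elements of positive degree of ℂ[x,y,z]/(Q) is zero.) -/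
/-!
Write `D_i f = Q_k f_i - Q_i f_k` for the minors of the Jacobian of `(Q, f)` against a fixed
variable `x_k`. Combining the weighted Euler identities `∑ wᵢ xᵢ fᵢ = m f` and
`∑ wᵢ xᵢ Qᵢ = d Q` gives `m Q_k f = ∑ wᵢ xᵢ D_i f + d f_k Q`. So if every `D_i f` lies in a
prime ideal containing `Q`, so does `m Q_k f`, and since neither `m` nor `Q_k` lies in it, `f` does.
-/

open MvPolynomial

namespace MvPolynomial

variable {σ R : Type*} [Fintype σ] [CommRing R]

theorem IsWeightedHomogeneous.nsmul_pderiv_mul_eq_sum {w : σ → ℕ} {d m : ℕ}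
    {Q f : MvPolynomial σ R} (hQ : Q.IsWeightedHomogeneous w d)
    (hf : f.IsWeightedHomogeneous w m) (k : σ) :
    m • (pderiv k Q * f) =
      ∑ i, w i • (X i * (pderiv k Q * pderiv i f - pderiv i Q * pderiv k f)) +
        d • (pderiv k f * Q) := by
  have hsum : ∑ i, w i • (X i * (pderiv k Q * pderiv i f - pderiv i Q * pderiv k f)) =
      pderiv k Q * ∑ i, w i • (X i * pderiv i f) - pderiv k f * ∑ i, w i • (X i * pderiv i Q) := by
    simp only [Finset.mul_sum, ← Finset.sum_sub_distrib, mul_smul_comm, ← smul_sub]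
    exact Finset.sum_congr rfl fun i _ => by ring_nf
  rw [hsum, hf.sum_weight_X_mul_pderiv, hQ.sum_weight_X_mul_pderiv]
  simp only [nsmul_eq_mul]
  ring

theorem IsWeightedHomogeneous.mem_of_pderiv_minors_mem {w : σ → ℕ} {d m : ℕ}
    {Q f : MvPolynomial σ R} (hQ : Q.IsWeightedHomogeneous w d)
    (hf : f.IsWeightedHomogeneous w m) (hm : IsUnit (m : R)) {P : Ideal (MvPolynomial σ R)}
    [P.IsPrime] (hQP : Q ∈ P) {k : σ} (hQk : pderiv k Q ∉ P)
    (hminors : ∀ i, pderiv k Q * pderiv i f - pderiv i Q * pderiv k f ∈ P) : f ∈ P := by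
  have hmul : m • (pderiv k Q * f) ∈ P := by
    rw [hQ.nsmul_pderiv_mul_eq_sum hf k]
    exact P.add_mem (P.sum_mem fun i _ => P.smul_of_tower_mem _ (P.mul_mem_left _ (hminors i)))
      (P.smul_of_tower_mem _ (P.mul_mem_left _ hQP))
  have hmP : IsUnit (m : MvPolynomial σ R) := by simpa only [map_natCast] using hm.map (C (σ := σ))
  rw [nsmul_eq_mul, Ideal.unit_mul_mem_iff_mem P hmP] at hmul
  exact (Ideal.IsPrime.mem_or_mem ‹_› hmul).resolve_left hQk

end MvPolynomial

theorem stmt8_general (a b c d m : ℕ) (hm : 1 ≤ m)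
    (Q : MvPolynomial (Fin 3) ℂ) (hirr : Irreducible Q)
    (hQ : Q.IsWeightedHomogeneous ![a, b, c] d)
    (hQz : pderiv 2 Q ∉ Ideal.span {Q})
    (f : MvPolynomial (Fin 3) ℂ) (hf : f.IsWeightedHomogeneous ![a, b, c] m)
    (hx : pderiv 2 Q * pderiv 0 f - pderiv 0 Q * pderiv 2 f ∈ Ideal.span {Q})
    (hy : pderiv 2 Q * pderiv 1 f - pderiv 1 Q * pderiv 2 f ∈ Ideal.span {Q}) :
    f ∈ Ideal.span {Q} := by
  have : (Ideal.span {Q}).IsPrime := (Ideal.span_singleton_prime hirr.ne_zero).2 hirr.prime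
  refine hQ.mem_of_pderiv_minors_mem hf (Nat.cast_ne_zero.2 (by omega)).isUnit
    (Ideal.mem_span_singleton_self Q) hQz fun i => ?_
  fin_cases i
  exacts [hx, hy, by simp]

theorem stmt8 (a b c d m : ℕ) (ha : 0 < a) (hb : 0 < b) (hc : 0 < c) (hm : 1 ≤ m)
    (Q : MvPolynomial (Fin 3) ℂ) (hirr : Irreducible Q)
    (hQ : Q.IsWeightedHomogeneous ![a, b, c] d)
    (hQz : pderiv 2 Q ∉ Ideal.span {Q})
    (f : MvPolynomial (Fin 3) ℂ) (hf : f.IsWeightedHomogeneous ![a, b, c] m)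
    (hx : pderiv 2 Q * pderiv 0 f - pderiv 0 Q * pderiv 2 f ∈ Ideal.span {Q})
    (hy : pderiv 2 Q * pderiv 1 f - pderiv 1 Q * pderiv 2 f ∈ Ideal.span {Q}) :
    f ∈ Ideal.span {Q} :=
  stmt8_general a b c d m hm Q hirr hQ hQz f hf hx hy
end

section
/- Let A be a commutative ℂ-algebra equipped with a Poisson bracket, and let S ⊆ A be a subset that generates A as a unital commutative ℂ-algebra. Then the ℂ-linear span of all brackets {a,b} with a, b ∈ A equals the ℂ-linear span of all brackets {s,a} with s ∈ S and a ∈ A; in symbols, {A, A} = {S, A}. -/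
/-!
Since `{1, 1} = 2 {1, 1}` by the Leibniz rule, brackets with `1` vanish. Antisymmetry and the
Leibniz rule turn the bracket into a derivation in its first argument as well, and rearranging
gives `{xy, b} = {x, yb} + {y, xb}`. So the set of `a` with `{a, A} ⊆ {S, A}` contains `S` and
the scalars and is closed under sums and products, hence is all of `A`.
-/

namespace PoissonBracket

variable {R A : Type*} [CommRing R] [CommRing A] [Algebra R A]

theorem bracket_one_right (br : A →ₗ[R] A →ₗ[R] A)
    (leib : ∀ a b c : A, br a (b * c) = br a b * c + b * br a c) (a : A) :
    br a 1 = 0 := by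
  have h := leib a 1 1
  simp only [mul_one, one_mul] at h
  linear_combination -h

theorem bracket_one_left (br : A →ₗ[R] A →ₗ[R] A) (anti : ∀ a b : A, br a b = - br b a)
    (leib : ∀ a b c : A, br a (b * c) = br a b * c + b * br a c) (b : A) :
    br 1 b = 0 := by
  rw [anti, bracket_one_right br leib, neg_zero]

theorem bracket_mul_left (br : A →ₗ[R] A →ₗ[R] A) (anti : ∀ a b : A, br a b = - br b a)
    (leib : ∀ a b c : A, br a (b * c) = br a b * c + b * br a c) (x y b : A) :
    br (x * y) b = br x (y * b) + br y (x * b) := by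
  linear_combination anti (x * y) b - leib b x y - leib x y b - leib y x b
    - b * anti x y - y * anti b x - x * anti b y

theorem bracket_mem_span_bracket_of_adjoin_eq_top (br : A →ₗ[R] A →ₗ[R] A)
    (anti : ∀ a b : A, br a b = - br b a)
    (leib : ∀ a b c : A, br a (b * c) = br a b * c + b * br a c)
    {S : Set A} (hS : Algebra.adjoin R S = ⊤) (a b : A) :
    br a b ∈ Submodule.span R {p : A | ∃ s ∈ S, ∃ a : A, br s a = p} := by
  set M := Submodule.span R {p : A | ∃ s ∈ S, ∃ a : A, br s a = p}
  have ha : a ∈ Algebra.adjoin R S := hS ▸ Algebra.mem_top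
  induction ha using Algebra.adjoin_induction generalizing b with
  | mem s hs => exact Submodule.subset_span ⟨s, hs, b, rfl⟩
  | algebraMap c =>
    rw [Algebra.algebraMap_eq_smul_one, map_smul, LinearMap.smul_apply,
      bracket_one_left br anti leib, smul_zero]
    exact M.zero_mem
  | add x y _ _ hx hy =>
    rw [map_add, LinearMap.add_apply]
    exact M.add_mem (hx b) (hy b)
  | mul x y _ _ hx hy =>
    rw [bracket_mul_left br anti leib]
    exact M.add_mem (hx (y * b)) (hy (x * b))

end PoissonBracket

theorem stmt10_general (A : Type*) [CommRing A] [Algebra ℂ A]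
    (br : A →ₗ[ℂ] A →ₗ[ℂ] A)
    (anti : ∀ a b : A, br a b = - br b a)
    (leib : ∀ a b c : A, br a (b * c) = br a b * c + b * br a c)
    (S : Set A) (hS : Algebra.adjoin ℂ S = ⊤) :
    Submodule.span ℂ {p : A | ∃ a b : A, br a b = p} =
      Submodule.span ℂ {p : A | ∃ s ∈ S, ∃ a : A, br s a = p} := by
  refine le_antisymm ?_ (Submodule.span_mono ?_)
  · rw [Submodule.span_le]
    rintro _ ⟨a, b, rfl⟩
    exact PoissonBracket.bracket_mem_span_bracket_of_adjoin_eq_top br anti leib hS a b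
  · rintro _ ⟨s, -, a, rfl⟩
    exact ⟨s, a, rfl⟩

/-- If `S` generates the commutative ℂ-algebra `A` (as a unital commutative algebra), and
`{·,·}` is a Poisson bracket on `A`, then `{A, A} = {S, A}` as ℂ-linear spans. -/
theorem stmt10 (A : Type*) [CommRing A] [Algebra ℂ A]
    (br : A →ₗ[ℂ] A →ₗ[ℂ] A)
    (anti : ∀ a b : A, br a b = - br b a)
    (leib : ∀ a b c : A, br a (b * c) = br a b * c + b * br a c)
    (jac : ∀ a b c : A, br a (br b c) = br (br a b) c + br b (br a c))
    (S : Set A) (hS : Algebra.adjoin ℂ S = ⊤) :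
    Submodule.span ℂ {p : A | ∃ a b : A, br a b = p} =
      Submodule.span ℂ {p : A | ∃ s ∈ S, ∃ a : A, br s a = p} :=
  stmt10_general A br anti leib S hS
end

section
/- Let m ≥ 2 be an integer. In ℂ[x,y] with the Poisson bracket {f,g} := f_x·g_y − f_y·g_x, let A be the ℂ-subalgebra generated by x^m, x·y, and y^m (the invariants of the ℤ/m-action). Let B be the ℂ-linear span of { {y^m, f} : f ∈ A } and let C be the ℂ-linear span of the monomials x^{m·j}·(x·y)^i for j ≥ 0 and 0 ≤ i ≤ m−2. Then B ⊆ A, B ∩ C = 0, and B + C = A; that is, C is a complement to { y^m, A } inside A. -/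
open MvPolynomial

/-- The standard symplectic Poisson bracket `{f,g} = f_x g_y − f_y g_x` on `ℂ[x,y]`. -/
noncomputable def stdBracket (f g : MvPolynomial (Fin 2) ℂ) : MvPolynomial (Fin 2) ℂ :=
  pderiv 0 f * pderiv 1 g - pderiv 1 f * pderiv 0 g

/-!
`A` is spanned by the monomials `x^p y^q` with `p ≡ q [MOD m]`, and
`{y^m, x^p y^q} = -m p x^(p-1) y^(q+m-1)`. Hence `{y^m, A}` is spanned by the invariant monomials
of `y`-degree at least `m - 1`, and `C` by those of `y`-degree at most `m - 2`: the two families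
split the monomial basis of `A`.
-/

namespace MvPolynomial

variable {σ R : Type*} [CommSemiring R]

theorem restrictSupport_union (s t : Set (σ →₀ ℕ)) :
    restrictSupport R (s ∪ t) = restrictSupport R s ⊔ restrictSupport R t := by
  simp only [restrictSupport_eq_span, Set.image_union, Submodule.span_union]

theorem disjoint_restrictSupport {s t : Set (σ →₀ ℕ)} (h : Disjoint s t) :
    Disjoint (restrictSupport R s) (restrictSupport R t) := by
  rw [Submodule.disjoint_def]
  intro p hs ht
  rw [← support_eq_empty, ← Finset.coe_eq_empty, ← Set.subset_empty_iff]
  exact h ((mem_restrictSupport_iff R).mp hs) ((mem_restrictSupport_iff R).mp ht)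

open scoped Pointwise in
theorem mul_mem_restrictSupport {M : AddSubmonoid (σ →₀ ℕ)} {p q : MvPolynomial σ R}
    (hp : p ∈ restrictSupport R M) (hq : q ∈ restrictSupport R M) :
    p * q ∈ restrictSupport R M := by
  have hpq := Submodule.mul_mem_mul hp hq
  rw [← restrictSupport_add] at hpq
  exact restrictSupport_mono R (Set.add_subset_iff.mpr fun _ ha _ hb => M.add_mem ha hb) hpq

theorem toSubmodule_adjoin_monomial_image (s : Set (σ →₀ ℕ)) :
    Subalgebra.toSubmodule (Algebra.adjoin R ((monomial · (1 : R)) '' s)) =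
      restrictSupport R (AddSubmonoid.closure s) := by
  apply le_antisymm
  · set M := AddSubmonoid.closure s
    have hone : (1 : MvPolynomial σ R) ∈ restrictSupport R M :=
      (monomial_mem_restrictSupport R).mpr (.inl M.zero_mem)
    let S : Subalgebra R (MvPolynomial σ R) :=
      (restrictSupport R M).toSubalgebra hone fun _ _ => mul_mem_restrictSupport
    change Algebra.adjoin R _ ≤ S
    rw [Algebra.adjoin_le_iff]
    rintro _ ⟨d, hd, rfl⟩
    exact (monomial_mem_restrictSupport R).mpr (.inl (AddSubmonoid.subset_closure hd))
  · rw [restrictSupport_eq_span, Submodule.span_le]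
    rintro _ ⟨d, hd, rfl⟩
    induction hd using AddSubmonoid.closure_induction with
    | mem d hd => exact Algebra.subset_adjoin ⟨d, hd, rfl⟩
    | zero => exact one_mem (Algebra.adjoin R _)
    | add d e _ _ hd he =>
      simp only [SetLike.mem_coe, Subalgebra.mem_toSubmodule] at hd he ⊢
      simpa only [monomial_mul, mul_one] using mul_mem hd he

end MvPolynomial

theorem Nat.add_one_modEq_iff {m p q : ℕ} (hm : 1 ≤ m) :
    p + 1 ≡ q [MOD m] ↔ p ≡ q + (m - 1) [MOD m] := by
  have hq : q + (m - 1) + 1 ≡ q [MOD m] := by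
    rw [show q + (m - 1) + 1 = q + m by omega]
    exact Nat.add_modEq_right
  exact ⟨fun h => Nat.ModEq.add_right_cancel' 1 (h.trans hq.symm),
    fun h => (h.add_right 1).trans hq⟩

namespace KleinianA

open Finsupp (single)

variable {R : Type*} [CommSemiring R]

theorem monomial_one_eq (d : Fin 2 →₀ ℕ) :
    monomial d (1 : R) = X 0 ^ d 0 * X 1 ^ d 1 := by
  rw [monomial_eq, Finsupp.prod_fintype _ _ (by simp), Fin.prod_univ_two, C_1, one_mul]

/-- Exponents of the monomials `x^p y^q` fixed by `(x, y) ↦ (ζ x, ζ⁻¹ y)` for all `ζ` with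
`ζ ^ m = 1`. -/
def invariantExponents (m : ℕ) : AddSubmonoid (Fin 2 →₀ ℕ) where
  carrier := {d | d 0 ≡ d 1 [MOD m]}
  add_mem' := Nat.ModEq.add
  zero_mem' := rfl

theorem mem_invariantExponents {m : ℕ} {d : Fin 2 →₀ ℕ} :
    d ∈ invariantExponents m ↔ d 0 ≡ d 1 [MOD m] := Iff.rfl

theorem closure_eq_invariantExponents (m : ℕ) :
    AddSubmonoid.closure {single 0 m, single 0 1 + single 1 1,
      single 1 m} = invariantExponents m := by
  apply le_antisymm
  · rw [AddSubmonoid.closure_le]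
    simp [Set.insert_subset_iff, mem_invariantExponents, Nat.ModEq]
  · intro d hd
    rcases le_total (d 0) (d 1) with hle | hle
    · obtain ⟨k, hk⟩ := (Nat.modEq_iff_dvd' hle).mp hd
      have hdecomp : d = d 0 • (single 0 1 + single 1 1) + k • single 1 m := by
        ext i
        fin_cases i <;> simp [mul_comm k]; omega
      rw [hdecomp]
      exact add_mem (nsmul_mem (AddSubmonoid.subset_closure (by simp)) _)
        (nsmul_mem (AddSubmonoid.subset_closure (by simp)) _)
    · obtain ⟨k, hk⟩ := (Nat.modEq_iff_dvd' hle).mp hd.symm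
      have hdecomp : d = d 1 • (single 0 1 + single 1 1) + k • single 0 m := by
        ext i
        fin_cases i <;> simp [mul_comm k]; omega
      rw [hdecomp]
      exact add_mem (nsmul_mem (AddSubmonoid.subset_closure (by simp)) _)
        (nsmul_mem (AddSubmonoid.subset_closure (by simp)) _)

theorem toSubmodule_adjoin_eq_restrictSupport (m : ℕ) :
    Subalgebra.toSubmodule (Algebra.adjoin R {(X 0 : MvPolynomial (Fin 2) R) ^ m, X 0 * X 1,
      X 1 ^ m}) = restrictSupport R (invariantExponents m) := by
  rw [← closure_eq_invariantExponents, ← MvPolynomial.toSubmodule_adjoin_monomial_image]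
  congr
  simp [Set.image_insert_eq, monomial_one_eq]

theorem span_X_zero_pow_mul_eq_restrictSupport {m n : ℕ} (hn : n < m) :
    Submodule.span R {p : MvPolynomial (Fin 2) R |
      ∃ j i : ℕ, i ≤ n ∧ X 0 ^ (m * j) * (X 0 * X 1) ^ i = p} =
      restrictSupport R {d | d ∈ invariantExponents m ∧ d 1 ≤ n} := by
  rw [restrictSupport_eq_span]
  congr 1
  ext p
  constructor
  · rintro ⟨j, i, hi, rfl⟩
    refine ⟨single 0 (m * j + i) + single 1 i, ⟨?_, by simpa using hi⟩, ?_⟩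
    · simp [mem_invariantExponents, Nat.ModEq]
    · simp only [monomial_one_eq, Finsupp.add_apply, Finsupp.single_eq_same,
        Finsupp.single_eq_of_ne zero_ne_one, Finsupp.single_eq_of_ne one_ne_zero, add_zero, zero_add]
      ring
  · rintro ⟨d, ⟨hd, hle⟩, rfl⟩
    obtain ⟨j, hj⟩ : ∃ j, d 0 = m * j + d 1 := by
      rw [mem_invariantExponents, Nat.ModEq, Nat.mod_eq_of_lt (by omega : d 1 < m)] at hd
      exact ⟨d 0 / m, by rw [← hd, add_comm, Nat.mod_add_div]⟩
    refine ⟨j, d 1, hle, ?_⟩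
    rw [show (monomial · (1 : R)) d = monomial d 1 from rfl, monomial_one_eq, hj]
    ring

noncomputable def stdBracketLeft (f : MvPolynomial (Fin 2) ℂ) :
    MvPolynomial (Fin 2) ℂ →ₗ[ℂ] MvPolynomial (Fin 2) ℂ where
  toFun := stdBracket f
  map_add' g h := by simp only [stdBracket, map_add]; ring
  map_smul' c g := by
    simp only [stdBracket, Derivation.map_smul, mul_smul_comm, smul_sub, RingHom.id_apply]

theorem stdBracketLeft_apply (f g : MvPolynomial (Fin 2) ℂ) :
    stdBracketLeft f g = stdBracket f g := rfl

theorem stdBracket_X_one_pow_monomial (m : ℕ) (d : Fin 2 →₀ ℕ) (c : ℂ) :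
    stdBracket (X 1 ^ m) (monomial d c) =
      monomial (d - single 0 1 + single 1 (m - 1)) (-(m * d 0 * c)) := by
  have h0 : pderiv 0 (X 1 ^ m : MvPolynomial (Fin 2) ℂ) = 0 := by simp [pderiv_X]
  have h1 : pderiv 1 (X 1 ^ m : MvPolynomial (Fin 2) ℂ) =
      monomial (single 1 (m - 1)) (m : ℂ) := by
    simp [X_pow_eq_monomial]
  rw [stdBracket, h0, h1, zero_mul, zero_sub, pderiv_monomial, monomial_mul, ← map_neg, add_comm]
  ring_nf

theorem map_stdBracketLeft_X_one_pow {m : ℕ} (hm : 1 ≤ m) :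
    (restrictSupport ℂ (invariantExponents m)).map (stdBracketLeft (X 1 ^ m)) =
      restrictSupport ℂ {d | d ∈ invariantExponents m ∧ m - 1 ≤ d 1} := by
  apply le_antisymm
  · rw [restrictSupport_eq_span, Submodule.map_span, Submodule.span_le]
    rintro _ ⟨_, ⟨d, hd, rfl⟩, rfl⟩
    rw [stdBracketLeft_apply, stdBracket_X_one_pow_monomial, SetLike.mem_coe,
      monomial_mem_restrictSupport]
    rcases Nat.eq_zero_or_pos (d 0) with h0 | h0
    · exact .inr (by simp [h0])
    · refine .inl ⟨?_, by simp⟩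
      rw [SetLike.mem_coe, mem_invariantExponents, ← Nat.sub_add_cancel h0] at hd
      simpa [mem_invariantExponents] using (Nat.add_one_modEq_iff hm).mp hd
  · rw [restrictSupport_eq_span, Submodule.span_le]
    rintro _ ⟨e, ⟨he, hle⟩, rfl⟩
    set d := e + single 0 1 - single 1 (m - 1)
    have hd : d ∈ invariantExponents m := by
      rw [mem_invariantExponents] at he ⊢
      simpa [d] using (Nat.add_one_modEq_iff hm).mpr (by rwa [Nat.sub_add_cancel hle])
    have hde : d - single 0 1 + single 1 (m - 1) = e := by
      ext i
      fin_cases i <;> simp [d]; omega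
    have hc : (m * d 0 : ℂ) ≠ 0 := by
      simpa [d, Nat.cast_add_one_ne_zero] using (by omega : m ≠ 0)
    refine ⟨monomial d (-(m * d 0 : ℂ))⁻¹,
      (monomial_mem_restrictSupport ℂ).mpr (.inl hd), ?_⟩
    rw [stdBracketLeft_apply, stdBracket_X_one_pow_monomial, hde, inv_neg, mul_neg, neg_neg,
      mul_inv_cancel₀ hc]

end KleinianA

open KleinianA in
theorem stmt13 (m : ℕ) (hm : 2 ≤ m)
    (A : Subalgebra ℂ (MvPolynomial (Fin 2) ℂ))
    (hA : A = Algebra.adjoin ℂ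
      {(X 0 : MvPolynomial (Fin 2) ℂ) ^ m, X 0 * X 1, X 1 ^ m})
    (B C : Submodule ℂ (MvPolynomial (Fin 2) ℂ))
    (hB : B = Submodule.span ℂ
      {p : MvPolynomial (Fin 2) ℂ | ∃ f ∈ A, stdBracket (X 1 ^ m) f = p})
    (hC : C = Submodule.span ℂ
      {p : MvPolynomial (Fin 2) ℂ |
        ∃ j i : ℕ, i ≤ m - 2 ∧ (X 0 : MvPolynomial (Fin 2) ℂ) ^ (m * j) * (X 0 * X 1) ^ i = p}) :
    B ≤ Subalgebra.toSubmodule A ∧ B ⊓ C = ⊥ ∧ B ⊔ C = Subalgebra.toSubmodule A := by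
  have hA' : Subalgebra.toSubmodule A = restrictSupport ℂ (invariantExponents m) := by
    rw [hA, toSubmodule_adjoin_eq_restrictSupport]
  have hB' : B = restrictSupport ℂ {d | d ∈ invariantExponents m ∧ m - 1 ≤ d 1} := by
    rw [hB, ← map_stdBracketLeft_X_one_pow (by omega), ← hA',
      ← Submodule.span_eq (Submodule.map _ _), Submodule.map_coe]
    rfl
  have hC' : C = restrictSupport ℂ {d | d ∈ invariantExponents m ∧ d 1 ≤ m - 2} := by
    rw [hC, span_X_zero_pow_mul_eq_restrictSupport (by omega)]
  rw [hA', hB', hC']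
  refine ⟨restrictSupport_mono ℂ fun d hd => hd.1,
    disjoint_iff.mp (disjoint_restrictSupport (Set.disjoint_left.mpr fun d hdB hdC => ?_)), ?_⟩
  · have := hdB.2.trans hdC.2
    omega
  · rw [← restrictSupport_union]
    congr 1
    ext d
    simp only [Set.mem_union, Set.mem_ofPred_eq, SetLike.mem_coe, ← and_or_left,
      and_iff_left_iff_imp]
    intro
    omega
end
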